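/- Let M be a connected loopless matroid of rank k ≥ 1 on a finite set S with rank function r. Then the base polytope of M is cut out by the nonnegativity constraints, the rank equation, and the rank inequalities indexed by non-degenerate flats: BP_M = {x ∈ ℝ^S : x(i) ≥ 0 for all i ∈ S, x(S) = k, and x(F) ≤ r(F) for every non-degenerate flat F of M}. -/

import Mathlib

open Finset

/-- A (finite) matroid on a finite ground set `E`, given by a submodular rank function,
following the matroid rank axioms (R1)-(R3). -/
structure FinMatroid (α : Type*) [DecidableEq α] where
  E : Finset α
  r : Finset α → ℕ
  r_le_card : ∀ ⦃A : Finset α⦄, A ⊆ E → r A ≤ A.card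
  r_mono : ∀ ⦃A B : Finset α⦄, A ⊆ B → B ⊆ E → r A ≤ r B
  r_submod : ∀ ⦃A B : Finset α⦄, A ⊆ E → B ⊆ E → r (A ∪ B) + r (A ∩ B) ≤ r A + r B

namespace FinMatroid

variable {α : Type*} [DecidableEq α]

/-- A set is independent if it is a subset of the ground set whose rank is its cardinality. -/
def Indep (M : FinMatroid α) (A : Finset α) : Prop :=
  A ⊆ M.E ∧ M.r A = A.card

/-- A base is a maximal independent set. -/
def Base (M : FinMatroid α) (B : Finset α) : Prop :=
  M.Indep B ∧ ∀ ⦃A : Finset α⦄, M.Indep A → B ⊆ A → A = B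

/-- A basis of `A` is a maximal independent subset of `A`. -/
def BasisOf (M : FinMatroid α) (I A : Finset α) : Prop :=
  I ⊆ A ∧ M.Indep I ∧ ∀ ⦃J : Finset α⦄, J ⊆ A → M.Indep J → I ⊆ J → J = I

/-- A flat is a set `F` with `F = {s ∈ E : r (F ∪ {s}) = r F}`. -/
def Flat (M : FinMatroid α) (F : Finset α) : Prop :=
  F = M.E.filter (fun s => M.r (F ∪ {s}) = M.r F)

/-- A matroid is loopless if every singleton of the ground set has rank one. -/
def Loopless (M : FinMatroid α) : Prop :=
  ∀ s ∈ M.E, M.r {s} = 1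

/-- The restriction `M|A` of `M` to `A`. -/
def restrict (M : FinMatroid α) (A : Finset α) : FinMatroid α where
  E := A ∩ M.E
  r := M.r
  r_le_card := fun _ h => M.r_le_card (h.trans inter_subset_right)
  r_mono := fun _ _ h h' => M.r_mono h (h'.trans inter_subset_right)
  r_submod := fun _ _ h h' =>
    M.r_submod (h.trans inter_subset_right) (h'.trans inter_subset_right)

/-- The contraction `M/C` of `C` in `M`, with rank function `A ↦ r (A ∪ C) - r C`. -/
def contract (M : FinMatroid α) (C : Finset α) : FinMatroid α where
  E := M.E \ C
  r := fun A => M.r (A ∪ C ∩ M.E) - M.r (C ∩ M.E)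
  r_le_card := by
    intro A hA
    have hAE : A ⊆ M.E := hA.trans sdiff_subset
    have hc : C ∩ M.E ⊆ M.E := inter_subset_right
    have h1 := M.r_submod hAE hc
    have h2 := M.r_le_card hAE
    beta_reduce
    omega
  r_mono := by
    intro A B hAB hB
    have hBE : B ⊆ M.E := hB.trans sdiff_subset
    have hc : C ∩ M.E ⊆ M.E := inter_subset_right
    have h1 : M.r (A ∪ C ∩ M.E) ≤ M.r (B ∪ C ∩ M.E) :=
      M.r_mono (union_subset_union hAB (Finset.Subset.refl _)) (union_subset hBE hc)
    beta_reduce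
    omega
  r_submod := by
    intro A B hA hB
    have hAE : A ⊆ M.E := hA.trans sdiff_subset
    have hBE : B ⊆ M.E := hB.trans sdiff_subset
    have hc : C ∩ M.E ⊆ M.E := inter_subset_right
    have hAc : A ∪ C ∩ M.E ⊆ M.E := union_subset hAE hc
    have hBc : B ∪ C ∩ M.E ⊆ M.E := union_subset hBE hc
    have h1 := M.r_submod hAc hBc
    have e1 : (A ∪ C ∩ M.E) ∪ (B ∪ C ∩ M.E) = (A ∪ B) ∪ C ∩ M.E := by
      ext x; simp only [Finset.mem_union, Finset.mem_inter]; tauto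
    have e2 : (A ∪ C ∩ M.E) ∩ (B ∪ C ∩ M.E) = (A ∩ B) ∪ C ∩ M.E := by
      ext x; simp only [Finset.mem_union, Finset.mem_inter]; tauto
    rw [e1, e2] at h1
    have hABc : (A ∩ B) ∪ C ∩ M.E ⊆ M.E := union_subset (inter_subset_left.trans hAE) hc
    have hABc' : (A ∪ B) ∪ C ∩ M.E ⊆ M.E := union_subset (union_subset hAE hBE) hc
    have h2 : M.r (C ∩ M.E) ≤ M.r ((A ∩ B) ∪ C ∩ M.E) := M.r_mono subset_union_right hABc
    have h3 : M.r (C ∩ M.E) ≤ M.r (A ∪ C ∩ M.E) := M.r_mono subset_union_right hAc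
    have h4 : M.r (C ∩ M.E) ≤ M.r (B ∪ C ∩ M.E) := M.r_mono subset_union_right hBc
    have h5 : M.r (C ∩ M.E) ≤ M.r ((A ∪ B) ∪ C ∩ M.E) := M.r_mono subset_union_right hABc'
    beta_reduce
    omega

/-- `A` is a separator of `M` if `r A + r (E \ A) = r E`. -/
def Separator (M : FinMatroid α) (A : Finset α) : Prop :=
  A ⊆ M.E ∧ M.r A + M.r (M.E \ A) = M.r M.E

/-- `M` is connected (inseparable) if its ground set is nonempty and its only
separators are `∅` and `E`. -/
def Connected (M : FinMatroid α) : Prop :=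
  M.E.Nonempty ∧ ∀ A : Finset α, M.Separator A → A = ∅ ∨ A = M.E

/-- For connected `M`, a set `∅ ≠ F ⊊ E` is non-degenerate if both `M|F` and `M/F`
are connected. -/
def Nondegenerate (M : FinMatroid α) (F : Finset α) : Prop :=
  F ≠ ∅ ∧ F ⊂ M.E ∧ (M.restrict F).Connected ∧ (M.contract F).Connected

end FinMatroid

noncomputable section

open FinMatroid

/-- The indicator (incidence) vector `1^A ∈ ℝ^α` of a finite set `A`. -/
def indicatorVec {α : Type*} [DecidableEq α] (A : Finset α) : α → ℝ :=
  fun i => if i ∈ A then 1 else 0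

/-- The base polytope of a matroid: the convex hull of the indicator vectors of its bases. -/
def basePolytope {α : Type*} [DecidableEq α] (M : FinMatroid α) : Set (α → ℝ) :=
  convexHull ℝ {x | ∃ B : Finset α, M.Base B ∧ x = indicatorVec B}

/-- `Q` is a face of `P`: either `∅`, or `P` itself, or the subset of `P` where some
linear functional attains its maximum over `P` (an exposed face). -/
def IsFaceOf {α : Type*} (P Q : Set (α → ℝ)) : Prop :=
  Q = ∅ ∨ Q = P ∨ ∃ ℓ : (α → ℝ) →ₗ[ℝ] ℝ, Q = {x ∈ P | ∀ y ∈ P, ℓ y ≤ ℓ x}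

/-- The dimension of a convex set: the dimension of the direction of its affine span. -/
def sdim {α : Type*} (Q : Set (α → ℝ)) : ℕ :=
  Module.finrank ℝ (affineSpan ℝ Q).direction

end

/-!
By Edmonds' theorem the base polytope is cut out by `x ≥ 0`, `x(E) = r(E)` and all rank
inequalities `x(A) ≤ r(A)`. Indeed, this polytope is compact and convex, and at a point with a
fractional coordinate, uncrossing a minimal tight set (one with `x(A) = r(A)`) yields
coordinates `i ≠ j` lying in the same tight sets, so the point can be moved along
`±(eᵢ - eⱼ)`. Hence its extreme points are indicator vectors of bases, and Krein–Milman
applies.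

It remains to derive every rank inequality from those of the non-degenerate flats. As `x ≥ 0`,
it suffices to treat flats (pass to the closure). If `M / F` has a separation `X ⊔ Y`, then
`F ∪ X` and `F ∪ Y` are flats with `r(F ∪ X) + r(F ∪ Y) = r(E) + r(F)`, so the inequality
of `F` follows from theirs and the rank equation. If `M / F` is connected but `M | F` has a
separation `A ⊔ B`, then `A` and `B` are flats (as `M` is loopless), `M / A` and `M / B` are
again connected (as `M` is connected), and `r(F) = r(A) + r(B)`.
-/

open Filter Topology

namespace FinMatroid

variable {α : Type*} [DecidableEq α] {M : FinMatroid α} {A B C D F X : Finset α}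
  {x d : α → ℝ}

lemma r_union_add_r_le_of_subset_inter (hA : A ⊆ M.E) (hB : B ⊆ M.E) (hC : C ⊆ A ∩ B) :
    M.r (A ∪ B) + M.r C ≤ M.r A + M.r B :=
  (Nat.add_le_add_left (M.r_mono hC (inter_subset_left.trans hA)) _).trans (M.r_submod hA hB)

lemma r_union_le (hA : A ⊆ M.E) (hB : B ⊆ M.E) : M.r (A ∪ B) ≤ M.r A + M.r B :=
  (Nat.le_add_right _ _).trans (M.r_submod hA hB)

lemma r_singleton_le {s : α} (hs : s ∈ M.E) : M.r {s} ≤ 1 := by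
  simpa using M.r_le_card (singleton_subset_iff.mpr hs)

lemma r_union_eq_of_forall_singleton (hA : A ⊆ M.E) (hB : B ⊆ M.E)
    (h : ∀ s ∈ B, M.r (A ∪ {s}) = M.r A) : M.r (A ∪ B) = M.r A := by
  induction B using Finset.induction_on with
  | empty => simp
  | insert s B _ ih =>
    have hsE : s ∈ M.E := hB (mem_insert_self s B)
    have hBE : B ⊆ M.E := (subset_insert s B).trans hB
    have hsub := r_union_add_r_le_of_subset_inter (C := A) (union_subset hA hBE)
      (union_subset hA (singleton_subset_iff.mpr hsE)) (by grind)
    have hmono := M.r_mono (subset_union_left (s₂ := insert s B))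
      (union_subset hA (insert_subset hsE hBE))
    rw [show A ∪ B ∪ (A ∪ {s}) = A ∪ insert s B by grind,
      ih hBE fun t ht ↦ h t (mem_insert_of_mem ht), h s (mem_insert_self s B)] at hsub
    omega

lemma Indep.subset (hB : M.Indep B) (hAB : A ⊆ B) : M.Indep A := by
  have hAE : A ⊆ M.E := hAB.trans hB.1
  have hBAE : B \ A ⊆ M.E := sdiff_subset.trans hB.1
  refine ⟨hAE, le_antisymm (M.r_le_card hAE) ?_⟩
  have h := r_union_le hAE hBAE
  rw [union_sdiff_of_subset hAB, hB.2] at h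
  have := M.r_le_card hBAE
  have := card_sdiff_add_card_eq_card hAB
  omega

lemma Base.r_ground_eq (hB : M.Base B) : M.r M.E = B.card := by
  obtain ⟨⟨hBE, hBr⟩, hmax⟩ := hB
  by_contra hne
  obtain ⟨s, hsE, hs⟩ : ∃ s ∈ M.E, M.r (B ∪ {s}) ≠ M.r B := by
    by_contra! h
    rw [← r_union_eq_of_forall_singleton hBE subset_rfl h, union_eq_right.mpr hBE] at hBr
    exact hne hBr
  have hsB : s ∉ B := fun h ↦ hs (by rw [union_eq_left.mpr (singleton_subset_iff.mpr h)])
  have hsBE : B ∪ {s} ⊆ M.E := union_subset hBE (singleton_subset_iff.mpr hsE)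
  have := r_union_le hBE (singleton_subset_iff.mpr hsE)
  have := r_singleton_le hsE
  have := M.r_mono subset_union_left hsBE
  have hcard : (B ∪ {s}).card = B.card + 1 := by
    rw [union_comm, ← insert_eq, card_insert_of_notMem hsB]
  have := hmax ⟨hsBE, by omega⟩ subset_union_left
  exact hsB (this ▸ mem_union_right B (mem_singleton_self s))

lemma flat_iff : M.Flat F ↔ F ⊆ M.E ∧ ∀ s ∈ M.E, M.r (F ∪ {s}) = M.r F → s ∈ F := by
  refine ⟨fun h ↦ ⟨h ▸ filter_subset _ _, fun s hs hr ↦ h ▸ mem_filter.mpr ⟨hs, hr⟩⟩,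
    fun ⟨hFE, h⟩ ↦ ?_⟩
  ext s
  simp only [mem_filter]
  exact ⟨fun hs ↦ ⟨hFE hs, by rw [union_eq_left.mpr (singleton_subset_iff.mpr hs)]⟩,
    fun ⟨hs, hr⟩ ↦ h s hs hr⟩

lemma Flat.subset_ground (hF : M.Flat F) : F ⊆ M.E := (flat_iff.mp hF).1

lemma Flat.mem_of_r_union_le (hF : M.Flat F) {s : α} (hs : s ∈ M.E)
    (hr : M.r (F ∪ {s}) ≤ M.r F) : s ∈ F :=
  (flat_iff.mp hF).2 s hs <| le_antisymm hr <|
    M.r_mono subset_union_left (union_subset hF.subset_ground (singleton_subset_iff.mpr hs))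

lemma exists_flat_superset (hA : A ⊆ M.E) : ∃ F, M.Flat F ∧ A ⊆ F ∧ M.r F = M.r A := by
  set F := M.E.filter fun s ↦ M.r (A ∪ {s}) = M.r A
  have hFE : F ⊆ M.E := filter_subset _ _
  have hAF : A ⊆ F := fun s hs ↦
    mem_filter.mpr ⟨hA hs, by rw [union_eq_left.mpr (singleton_subset_iff.mpr hs)]⟩
  have hrF : M.r F = M.r A := by
    rw [← union_eq_right.mpr hAF]
    exact r_union_eq_of_forall_singleton hA hFE fun s hs ↦ (mem_filter.mp hs).2
  refine ⟨F, flat_iff.mpr ⟨hFE, fun s hs hr ↦ mem_filter.mpr ⟨hs, ?_⟩⟩, hAF, hrF⟩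
  have := M.r_mono (union_subset_union_left hAF (s₁ := A) (t := {s}))
    (union_subset hFE (singleton_subset_iff.mpr hs))
  have := M.r_mono subset_union_left (union_subset hA (singleton_subset_iff.mpr hs))
  omega

lemma Separator.compl {N : FinMatroid α} {S : Finset α} (hS : N.Separator S) :
    N.Separator (N.E \ S) :=
  ⟨sdiff_subset, by rw [Finset.sdiff_sdiff_eq_self hS.1, add_comm]; exact hS.2⟩

lemma Separator.r_union {N : FinMatroid α} {S : Finset α} (hS : N.Separator S)
    (hA : A ⊆ S) (hB : B ⊆ N.E \ S) : N.r (A ∪ B) = N.r A + N.r B := by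
  obtain ⟨hSE, hsep⟩ := hS
  have hAE : A ⊆ N.E := hA.trans hSE
  have hBE : B ⊆ N.E := hB.trans sdiff_subset
  have h1 := r_union_add_r_le_of_subset_inter (C := B) (union_subset hSE hBE)
    (sdiff_subset : N.E \ S ⊆ N.E) (by grind)
  have h2 := r_union_add_r_le_of_subset_inter (C := A) (union_subset hAE hBE) hSE (by grind)
  rw [show S ∪ B ∪ (N.E \ S) = N.E by grind] at h1
  rw [show A ∪ B ∪ S = S ∪ B by grind] at h2
  have := r_union_le hAE hBE
  omega

lemma exists_separator_of_not_connected {N : FinMatroid α} (hne : N.E.Nonempty)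
    (h : ¬ N.Connected) : ∃ S, N.Separator S ∧ S ≠ ∅ ∧ S ≠ N.E := by
  simpa only [Connected, hne, true_and, not_forall, not_or, exists_prop] using h

lemma restrict_ground (hF : F ⊆ M.E) : (M.restrict F).E = F := inter_eq_left.mpr hF

lemma separator_restrict_iff (hF : F ⊆ M.E) :
    (M.restrict F).Separator A ↔ A ⊆ F ∧ M.r A + M.r (F \ A) = M.r F := by
  simp only [Separator, restrict_ground hF]
  rfl

lemma contract_r (hC : C ⊆ M.E) (A : Finset α) :
    (M.contract C).r A = M.r (A ∪ C) - M.r C := by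
  simp only [contract, inter_eq_left.mpr hC]

lemma separator_contract_iff (hC : C ⊆ M.E) : (M.contract C).Separator X ↔
    X ⊆ M.E \ C ∧ M.r (X ∪ C) + M.r ((M.E \ C) \ X ∪ C) = M.r M.E + M.r C := by
  have hE' : (M.contract C).E = M.E \ C := rfl
  simp only [Separator, hE', contract_r hC, sdiff_union_of_subset hC]
  refine and_congr_right fun hX ↦ ?_
  have hXC : X ∪ C ⊆ M.E := union_subset (hX.trans sdiff_subset) hC
  have hYC : (M.E \ C) \ X ∪ C ⊆ M.E := union_subset (sdiff_subset.trans sdiff_subset) hC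
  have := M.r_mono subset_union_right hXC
  have := M.r_mono subset_union_right hYC
  have := M.r_mono hXC subset_rfl
  have := M.r_mono hYC subset_rfl
  omega

lemma Flat.of_separator_restrict (hloop : M.Loopless) (hF : M.Flat F)
    (hA : (M.restrict F).Separator A) : M.Flat A := by
  have hFE := hF.subset_ground
  obtain ⟨hAF, hsep⟩ := (separator_restrict_iff hFE).mp hA
  refine flat_iff.mpr ⟨hAF.trans hFE, fun s hs hr ↦ ?_⟩
  have hsF : s ∈ F := hF.mem_of_r_union_le hs <| by
    have h := r_union_le (union_subset (hAF.trans hFE) (singleton_subset_iff.mpr hs))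
      (sdiff_subset.trans hFE : F \ A ⊆ M.E)
    rw [show A ∪ {s} ∪ (F \ A) = F ∪ {s} by grind] at h
    omega
  by_contra hsA
  have h : M.r (A ∪ {s}) = M.r A + M.r {s} :=
    hA.r_union subset_rfl (by rw [restrict_ground hFE]; simpa [hsF])
  rw [hloop s hs] at h
  omega

lemma Flat.union_of_separator_contract (hF : M.Flat F) (hX : (M.contract F).Separator X) :
    M.Flat (F ∪ X) := by
  have hFE := hF.subset_ground
  obtain ⟨hXsub, hsep⟩ := (separator_contract_iff hFE).mp hX
  have hXE : X ⊆ M.E := hXsub.trans sdiff_subset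
  refine flat_iff.mpr ⟨union_subset hFE hXE, fun s hs hr ↦ ?_⟩
  by_contra hs'
  have hsF : s ∉ F := fun h ↦ hs' (mem_union_left X h)
  refine hsF (hF.mem_of_r_union_le hs ?_)
  have h := r_union_add_r_le_of_subset_inter (C := F ∪ {s})
    (union_subset (union_subset hFE hXE) (singleton_subset_iff.mpr hs))
    (union_subset (sdiff_subset.trans sdiff_subset) hFE : (M.E \ F) \ X ∪ F ⊆ M.E) (by grind)
  rw [show F ∪ X ∪ {s} ∪ ((M.E \ F) \ X ∪ F) = M.E by grind, hr, union_comm F X] at h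
  omega

/-- As `M / D = (M / C) / (D \ C)`, this says that separators survive contraction. -/
lemma separator_contract_sdiff (hCD : C ⊆ D) (hD : D ⊆ M.E)
    (hX : (M.contract C).Separator X) : (M.contract D).Separator (X \ D) := by
  have hC := hCD.trans hD
  obtain ⟨hXsub, hsep⟩ := (separator_contract_iff hC).mp hX
  set Y := (M.E \ C) \ X
  have hXE : X ⊆ M.E := hXsub.trans sdiff_subset
  have hYE : Y ⊆ M.E := sdiff_subset.trans sdiff_subset
  have hXD : X ∩ D ∪ C ⊆ M.E := union_subset (inter_subset_left.trans hXE) hC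
  have hYD : Y ∩ D ∪ C ⊆ M.E := union_subset (inter_subset_left.trans hYE) hC
  have hmod : (M.contract C).r (X ∩ D ∪ Y ∩ D) =
      (M.contract C).r (X ∩ D) + (M.contract C).r (Y ∩ D) :=
    hX.r_union inter_subset_left inter_subset_left
  rw [contract_r hC, contract_r hC, contract_r hC, show X ∩ D ∪ Y ∩ D ∪ C = D by grind] at hmod
  have := M.r_mono subset_union_right hXD
  have := M.r_mono subset_union_right hYD
  have := M.r_mono hCD hD
  have hX' := r_union_add_r_le_of_subset_inter (C := C) (union_subset hXE hC) hYD (by grind)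
  have hY' := r_union_add_r_le_of_subset_inter (C := C) (union_subset hYE hC) hXD (by grind)
  rw [show X ∪ C ∪ (Y ∩ D ∪ C) = X \ D ∪ D by grind] at hX'
  rw [show Y ∪ C ∪ (X ∩ D ∪ C) = (M.E \ D) \ (X \ D) ∪ D by grind] at hY'
  have hsub := r_union_add_r_le_of_subset_inter (C := D)
    (union_subset (sdiff_subset.trans hXE) hD : X \ D ∪ D ⊆ M.E)
    (union_subset (sdiff_subset.trans sdiff_subset) hD : (M.E \ D) \ (X \ D) ∪ D ⊆ M.E)
    (by grind)
  rw [show X \ D ∪ D ∪ ((M.E \ D) \ (X \ D) ∪ D) = M.E by grind] at hsub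
  exact (separator_contract_iff hD).mpr ⟨by grind, by omega⟩

lemma separator_of_separator_contract_of_subset (hF : F ⊆ M.E)
    (hA : (M.restrict F).Separator A) (hX : (M.contract A).Separator X) (hXF : X ⊆ F) :
    M.Separator X := by
  obtain ⟨hAF, -⟩ := (separator_restrict_iff hF).mp hA
  obtain ⟨hXsub, hsep⟩ := (separator_contract_iff (hAF.trans hF)).mp hX
  have hmod : M.r (A ∪ X) = M.r A + M.r X :=
    hA.r_union subset_rfl (by rw [restrict_ground hF]; grind)
  refine ⟨hXsub.trans sdiff_subset, ?_⟩
  rw [show M.E \ X = (M.E \ A) \ X ∪ A by grind]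
  rw [union_comm X A] at hsep
  have := M.r_mono (subset_union_right (s₁ := (M.E \ A) \ X))
    (union_subset (sdiff_subset.trans sdiff_subset) (hAF.trans hF))
  omega

/-- A separation of `M / A` induces one of `M / F`; its side inside `F` would separate `M`. -/
lemma Connected.contract_of_separator_restrict (hconn : M.Connected) (hF : F ⊆ M.E)
    (hFc : (M.contract F).Connected) (hA : (M.restrict F).Separator A) :
    (M.contract A).Connected := by
  obtain ⟨hAF, -⟩ := (separator_restrict_iff hF).mp hA
  obtain ⟨e, he⟩ := hFc.1
  obtain ⟨heE, heF⟩ := mem_sdiff.mp he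
  have hempty : ∀ Z, (M.contract A).Separator Z → Z ⊆ F → Z = ∅ := fun Z hZ hZF ↦
    (hconn.2 Z (separator_of_separator_contract_of_subset hF hA hZ hZF)).resolve_right
      fun h ↦ heF (hZF (h ▸ heE))
  refine ⟨⟨e, mem_sdiff.mpr ⟨heE, fun h ↦ heF (hAF h)⟩⟩, fun X hX ↦ ?_⟩
  rcases hFc.2 _ (separator_contract_sdiff hAF hF hX) with h | h
  · exact .inl (hempty X hX (sdiff_eq_empty_iff_subset.mp h))
  · have hYF : (M.E \ A) \ X ⊆ F := fun w hw ↦ by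
      have := Finset.ext_iff.mp h w
      change w ∈ X \ F ↔ w ∈ M.E \ F at this
      grind
    exact .inr (hX.1.antisymm (sdiff_eq_empty_iff_subset.mp (hempty _ hX.compl hYF)))

lemma sum_le_r_of_contract_connected (hconn : M.Connected) (hloop : M.Loopless)
    (hnd : ∀ F, M.Flat F → M.Nondegenerate F → ∑ i ∈ F, x i ≤ M.r F)
    {F : Finset α} (hF : M.Flat F) (hFE : F ≠ M.E) (hFc : (M.contract F).Connected) :
    ∑ i ∈ F, x i ≤ M.r F := by
  have hFE' := hF.subset_ground
  by_cases hF0 : F = ∅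
  · simp [hF0]
  by_cases hFr : (M.restrict F).Connected
  · exact hnd F hF ⟨hF0, hFE'.ssubset_of_ne hFE, hFr, hFc⟩
  obtain ⟨A, hA, hA0, hAF⟩ := exists_separator_of_not_connected
    (by rw [restrict_ground hFE']; exact nonempty_iff_ne_empty.mpr hF0) hFr
  have hB : (M.restrict F).Separator (F \ A) := by
    simpa only [restrict_ground hFE'] using hA.compl
  obtain ⟨hAsub, hsep⟩ := (separator_restrict_iff hFE').mp hA
  have hAF' : A ⊂ F := hAsub.ssubset_of_ne (restrict_ground hFE' ▸ hAF)
  have hBF : F \ A ⊂ F := sdiff_ssubset hAsub (nonempty_iff_ne_empty.mpr hA0)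
  have := card_lt_card hAF'
  have := card_lt_card hBF
  have hxA := sum_le_r_of_contract_connected hconn hloop hnd
    (hF.of_separator_restrict hloop hA) (hAF'.trans_subset hFE').ne
    (hconn.contract_of_separator_restrict hFE' hFc hA)
  have hxB := sum_le_r_of_contract_connected hconn hloop hnd
    (hF.of_separator_restrict hloop hB) (hBF.trans_subset hFE').ne
    (hconn.contract_of_separator_restrict hFE' hFc hB)
  have hsep' : (M.r A : ℝ) + M.r (F \ A) = M.r F := by exact_mod_cast hsep
  rw [← sum_sdiff hAsub]
  linarith
termination_by F.card

lemma sum_le_r_of_flat (hconn : M.Connected) (hloop : M.Loopless)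
    (hsum : ∑ i ∈ M.E, x i = M.r M.E)
    (hnd : ∀ F, M.Flat F → M.Nondegenerate F → ∑ i ∈ F, x i ≤ M.r F)
    {F : Finset α} (hF : M.Flat F) :
    ∑ i ∈ F, x i ≤ M.r F := by
  have hFE := hF.subset_ground
  by_cases hFE' : F = M.E
  · rw [hFE', hsum]
  by_cases hFc : (M.contract F).Connected
  · exact sum_le_r_of_contract_connected hconn hloop hnd hF hFE' hFc
  obtain ⟨X, hX, hX0, hXE⟩ := exists_separator_of_not_connected
    (sdiff_nonempty.mpr fun h ↦ hFE' (hFE.antisymm h)) hFc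
  have hY : (M.contract F).Separator ((M.E \ F) \ X) := hX.compl
  obtain ⟨hXsub, hsep⟩ := (separator_contract_iff hFE).mp hX
  set Y := (M.E \ F) \ X
  have hY0 : Y.Nonempty := sdiff_nonempty.mpr fun h ↦ hXE (hXsub.antisymm h)
  have : (M.E \ (F ∪ X)).card < (M.E \ F).card := by
    rw [show M.E \ (F ∪ X) = (M.E \ F) \ X by grind]
    exact card_lt_card (sdiff_ssubset hXsub (nonempty_iff_ne_empty.mpr hX0))
  have : (M.E \ (F ∪ Y)).card < (M.E \ F).card := by
    rw [show M.E \ (F ∪ Y) = (M.E \ F) \ Y by grind]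
    exact card_lt_card (sdiff_ssubset sdiff_subset hY0)
  have hxX := sum_le_r_of_flat hconn hloop hsum hnd (hF.union_of_separator_contract hX)
  have hxY := sum_le_r_of_flat hconn hloop hsum hnd (hF.union_of_separator_contract hY)
  have hxsum : ∑ i ∈ F ∪ X, x i + ∑ i ∈ F ∪ Y, x i = ∑ i ∈ M.E, x i + ∑ i ∈ F, x i := by
    rw [← sum_union_inter, show F ∪ X ∪ (F ∪ Y) = M.E by grind,
      show (F ∪ X) ∩ (F ∪ Y) = F by grind]
  have hsep' : (M.r (F ∪ X) : ℝ) + M.r (F ∪ Y) = M.r M.E + M.r F := by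
    rw [union_comm F X, union_comm F Y]; exact_mod_cast hsep
  linarith
termination_by (M.E \ F).card

lemma sum_le_r_of_nondegenerate (hconn : M.Connected) (hloop : M.Loopless)
    (h0 : ∀ i ∈ M.E, 0 ≤ x i) (hsum : ∑ i ∈ M.E, x i = M.r M.E)
    (hnd : ∀ F, M.Flat F → M.Nondegenerate F → ∑ i ∈ F, x i ≤ M.r F) (hA : A ⊆ M.E) :
    ∑ i ∈ A, x i ≤ M.r A := by
  obtain ⟨F, hF, hAF, hrF⟩ := exists_flat_superset hA
  calc ∑ i ∈ A, x i ≤ ∑ i ∈ F, x i :=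
        sum_le_sum_of_subset_of_nonneg hAF fun i hi _ ↦ h0 i (hF.subset_ground hi)
    _ ≤ M.r F := sum_le_r_of_flat hconn hloop hsum hnd hF
    _ = M.r A := by rw [hrF]

def rankPolytope (M : FinMatroid α) : Set (α → ℝ) :=
  {x | (∀ i ∈ M.E, 0 ≤ x i) ∧ ∑ i ∈ M.E, x i = M.r M.E ∧ ∀ A ⊆ M.E, ∑ i ∈ A, x i ≤ M.r A}

lemma convex_rankPolytope : Convex ℝ M.rankPolytope := by
  rintro x ⟨hx0, hxE, hxA⟩ y ⟨hy0, hyE, hyA⟩ a b ha hb hab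
  have hsum (A : Finset α) :
      ∑ i ∈ A, (a • x + b • y) i = a * ∑ i ∈ A, x i + b * ∑ i ∈ A, y i := by
    simp [sum_add_distrib, mul_sum]
  refine ⟨fun i hi ↦ ?_, ?_, fun A hA ↦ ?_⟩
  · exact add_nonneg (mul_nonneg ha (hx0 i hi)) (mul_nonneg hb (hy0 i hi))
  · rw [hsum, hxE, hyE, ← add_mul, hab, one_mul]
  · calc ∑ i ∈ A, (a • x + b • y) i
        ≤ a * M.r A + b * M.r A := by
          rw [hsum]
          exact add_le_add (mul_le_mul_of_nonneg_left (hxA A hA) ha)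
            (mul_le_mul_of_nonneg_left (hyA A hA) hb)
      _ = M.r A := by rw [← add_mul, hab, one_mul]

lemma isClosed_rankPolytope : IsClosed M.rankPolytope := by
  have hsum (A : Finset α) : Continuous fun x : α → ℝ ↦ ∑ i ∈ A, x i :=
    continuous_finsetSum _ fun i _ ↦ continuous_apply i
  simp only [rankPolytope, Set.ofPred_and, Set.ofPred_forall]
  exact (isClosed_iInter fun i ↦ isClosed_iInter fun _ ↦
    isClosed_le continuous_const (continuous_apply i)).inter <|
    (isClosed_eq (hsum _) continuous_const).inter <|
    isClosed_iInter fun A ↦ isClosed_iInter fun _ ↦ isClosed_le (hsum A) continuous_const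

lemma le_one_of_mem_rankPolytope (hx : x ∈ M.rankPolytope) {i : α} (hi : i ∈ M.E) :
    x i ≤ 1 := by
  have h := hx.2.2 {i} (singleton_subset_iff.mpr hi)
  rw [sum_singleton] at h
  exact h.trans (by exact_mod_cast r_singleton_le hi)

lemma isCompact_rankPolytope [Fintype α] (hE : M.E = univ) : IsCompact M.rankPolytope :=
  Metric.isCompact_of_isClosed_isBounded isClosed_rankPolytope <|
    (Metric.isBounded_Icc (0 : α → ℝ) 1).subset fun _ hx ↦
      ⟨fun i ↦ hx.1 i (hE ▸ mem_univ i),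
        fun i ↦ le_one_of_mem_rankPolytope hx (hE ▸ mem_univ i)⟩

lemma sum_indicatorVec (A B : Finset α) : ∑ i ∈ A, indicatorVec B i = (A ∩ B).card := by
  simp [indicatorVec, sum_ite_mem]

lemma indicatorVec_mem_rankPolytope (hB : M.Base B) : indicatorVec B ∈ M.rankPolytope := by
  refine ⟨fun i _ ↦ ?_, ?_, fun A hA ↦ ?_⟩
  · unfold indicatorVec; split_ifs <;> norm_num
  · rw [sum_indicatorVec, inter_eq_right.mpr hB.1.1, hB.r_ground_eq]
  · rw [sum_indicatorVec, ← (hB.1.subset inter_subset_right).2]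
    exact_mod_cast M.r_mono inter_subset_left hA

lemma basePolytope_subset_rankPolytope : basePolytope M ⊆ M.rankPolytope :=
  convexHull_min (by rintro _ ⟨B, hB, rfl⟩; exact indicatorVec_mem_rankPolytope hB)
    convex_rankPolytope

lemma base_of_indicatorVec_mem (hB : B ⊆ M.E) (h : indicatorVec B ∈ M.rankPolytope) :
    M.Base B := by
  obtain ⟨-, hE, hA⟩ := h
  have hr := hA B hB
  rw [sum_indicatorVec, inter_eq_right.mpr hB] at hE
  rw [sum_indicatorVec, inter_self] at hr
  have hE' : B.card = M.r M.E := by exact_mod_cast hE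
  refine ⟨⟨hB, le_antisymm (M.r_le_card hB) (by exact_mod_cast hr)⟩, fun A hA hBA ↦ ?_⟩
  have := M.r_mono hA.1 subset_rfl
  exact (eq_of_subset_of_card_le hBA (by rw [← hA.2]; omega)).symm

lemma eventually_add_mul_le {a b c : ℝ} (hac : a ≤ c) (hb : a = c → b = 0) :
    ∀ᶠ t in 𝓝 (0 : ℝ), a + t * b ≤ c := by
  rcases hac.lt_or_eq with h | h
  · have : Tendsto (fun t : ℝ ↦ a + t * b) (𝓝 0) (𝓝 a) :=
      (by fun_prop : Continuous fun t : ℝ ↦ a + t * b).tendsto' 0 a (by simp)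
    exact (this.eventually (eventually_lt_nhds h)).mono fun _ ↦ le_of_lt
  · exact .of_forall fun t ↦ by rw [hb h, mul_zero, add_zero, h]

lemma eventually_add_smul_mem_rankPolytope (hx : x ∈ M.rankPolytope)
    (hd0 : ∀ i ∈ M.E, x i = 0 → d i = 0) (hdE : ∑ i ∈ M.E, d i = 0)
    (hdA : ∀ A ⊆ M.E, ∑ i ∈ A, x i = M.r A → ∑ i ∈ A, d i = 0) :
    ∀ᶠ t in 𝓝 (0 : ℝ), x + t • d ∈ M.rankPolytope := by
  obtain ⟨hx0, hxE, hxA⟩ := hx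
  have hsum (t : ℝ) (A : Finset α) :
      ∑ i ∈ A, (x + t • d) i = ∑ i ∈ A, x i + t * ∑ i ∈ A, d i := by
    simp [sum_add_distrib, mul_sum]
  have h0 : ∀ᶠ t in 𝓝 (0 : ℝ), ∀ i ∈ M.E, 0 ≤ (x + t • d) i :=
    (eventually_all_finset _).2 fun i hi ↦
      (eventually_add_mul_le (a := -x i) (b := -d i) (neg_nonpos.mpr (hx0 i hi))
        fun h ↦ by rw [hd0 i hi (neg_eq_zero.mp h), neg_zero]).mono
        fun t ht ↦ by simp only [Pi.add_apply, Pi.smul_apply, smul_eq_mul]; linarith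
  have hA : ∀ᶠ t in 𝓝 (0 : ℝ), ∀ A ∈ M.E.powerset, ∑ i ∈ A, (x + t • d) i ≤ M.r A :=
    (eventually_all_finset _).2 fun A hA ↦ by
      simp_rw [hsum]
      exact eventually_add_mul_le (hxA A (mem_powerset.mp hA)) (hdA A (mem_powerset.mp hA))
  filter_upwards [h0, hA] with t ht0 htA
  exact ⟨ht0, by rw [hsum, hxE, hdE, mul_zero, add_zero],
    fun A hA ↦ htA A (mem_powerset.mpr hA)⟩

lemma sum_inter_eq_r (hx : x ∈ M.rankPolytope) (hA : A ⊆ M.E) (hB : B ⊆ M.E)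
    (hAt : ∑ i ∈ A, x i = M.r A) (hBt : ∑ i ∈ B, x i = M.r B) :
    ∑ i ∈ A ∩ B, x i = M.r (A ∩ B) := by
  have hsub : (M.r (A ∪ B) : ℝ) + M.r (A ∩ B) ≤ M.r A + M.r B := by
    exact_mod_cast M.r_submod hA hB
  have := sum_union_inter (s₁ := A) (s₂ := B) (f := x)
  have := hx.2.2 (A ∪ B) (union_subset hA hB)
  have := hx.2.2 (A ∩ B) (inter_subset_left.trans hA)
  linarith

/-- The sum over a tight set is an integer. -/
lemma exists_ne_frac_of_sum_eq_r {T : Finset α} {i : α} (hT : ∑ l ∈ T, x l = M.r T)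
    (hi : i ∈ T) (hi0 : 0 < x i) (hi1 : x i < 1) : ∃ j ∈ T, j ≠ i ∧ x j ≠ 0 ∧ x j ≠ 1 := by
  by_contra! h
  obtain ⟨n, hn⟩ : ∃ n : ℕ, ∑ j ∈ T.erase i, x j = n := by
    refine sum_induction _ (fun y : ℝ ↦ ∃ n : ℕ, y = n)
      (fun _ _ ⟨m, hm⟩ ⟨n, hn⟩ ↦ ⟨m + n, by simp [hm, hn]⟩) ⟨0, by simp⟩
      fun j hj ↦ ?_
    by_cases hj0 : x j = 0
    · exact ⟨0, by simp [hj0]⟩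
    · exact ⟨1, by simp [h j (mem_of_mem_erase hj) (ne_of_mem_erase hj) hj0]⟩
  rw [← add_sum_erase T x hi, hn] at hT
  have h0 : ((0 : ℤ) : ℝ) < ((M.r T - n : ℤ) : ℝ) := by push_cast; linarith
  have h1 : ((M.r T - n : ℤ) : ℝ) < ((1 : ℤ) : ℝ) := by push_cast; linarith
  have := Int.cast_lt.mp h0
  have := Int.cast_lt.mp h1
  omega

/-- Take a tight set `T` of minimal size containing a fractional coordinate. It contains a
second one, and as tight sets are closed under intersection, every tight set meeting the
fractional part of `T` contains `T`. -/
lemma exists_ne_pos_forall_tight_mem_iff (hx : x ∈ M.rankPolytope) {k : α} (hk : k ∈ M.E)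
    (hk0 : x k ≠ 0) (hk1 : x k ≠ 1) : ∃ i j, i ≠ j ∧ 0 < x i ∧ 0 < x j ∧
      ∀ A ⊆ M.E, ∑ l ∈ A, x l = M.r A → (i ∈ A ↔ j ∈ A) := by
  have hpos : ∀ i ∈ M.E, x i ≠ 0 → 0 < x i := fun i hi h ↦ (hx.1 i hi).lt_of_ne' h
  set 𝒯 := M.E.powerset.filter fun T ↦ ∑ i ∈ T, x i = M.r T ∧ ∃ i ∈ T, x i ≠ 0 ∧ x i ≠ 1
  obtain ⟨T, hT, hTmin⟩ := exists_min_image 𝒯 card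
    ⟨M.E, mem_filter.mpr ⟨mem_powerset_self _, hx.2.1, k, hk, hk0, hk1⟩⟩
  obtain ⟨hTE, hTt, i, hiT, hi0, hi1⟩ := mem_filter.mp hT
  rw [mem_powerset] at hTE
  obtain ⟨j, hjT, hji, hj0, hj1⟩ := exists_ne_frac_of_sum_eq_r hTt hiT (hpos i (hTE hiT) hi0)
    ((le_one_of_mem_rankPolytope hx (hTE hiT)).lt_of_ne hi1)
  have hsup : ∀ A ⊆ M.E, ∑ l ∈ A, x l = M.r A →
      ∀ l ∈ T, x l ≠ 0 → x l ≠ 1 → l ∈ A → T ⊆ A := by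
    intro A hA hAt l hlT hl0 hl1 hlA
    have hmem : A ∩ T ∈ 𝒯 := mem_filter.mpr ⟨mem_powerset.mpr (inter_subset_left.trans hA),
      sum_inter_eq_r hx hA hTE hAt hTt, l, mem_inter.mpr ⟨hlA, hlT⟩, hl0, hl1⟩
    exact inter_eq_right.mp (eq_of_subset_of_card_le inter_subset_right (hTmin _ hmem))
  exact ⟨i, j, hji.symm, hpos i (hTE hiT) hi0, hpos j (hTE hjT) hj0, fun A hA hAt ↦
    ⟨fun h ↦ hsup A hA hAt i hiT hi0 hi1 h hjT, fun h ↦ hsup A hA hAt j hjT hj0 hj1 h hiT⟩⟩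

lemma zero_or_one_of_mem_extremePoints (hx : x ∈ M.rankPolytope.extremePoints ℝ) :
    ∀ i ∈ M.E, x i = 0 ∨ x i = 1 := by
  by_contra! ⟨k, hk, hk0, hk1⟩
  obtain ⟨i, j, hij, hi, hj, htight⟩ := exists_ne_pos_forall_tight_mem_iff hx.1 hk hk0 hk1
  set d : α → ℝ := Pi.single i 1 - Pi.single j 1
  have hdsum (A : Finset α) :
      ∑ l ∈ A, d l = (if i ∈ A then 1 else 0) - (if j ∈ A then 1 else 0) := by
    simp [d, sum_sub_distrib, sum_pi_single']
  have hdA : ∀ A ⊆ M.E, ∑ l ∈ A, x l = M.r A → ∑ l ∈ A, d l = 0 := fun A hA hAt ↦ by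
    simp [hdsum, htight A hA hAt]
  have hd := eventually_add_smul_mem_rankPolytope hx.1
    (fun l _ hl ↦ by
      have hli : l ≠ i := by rintro rfl; linarith
      have hlj : l ≠ j := by rintro rfl; linarith
      simp [d, hli, hlj])
    (hdA _ subset_rfl hx.1.2.1) hdA
  obtain ⟨ε, ⟨hplus, hminus⟩, hε⟩ : ∃ ε : ℝ,
      (x + ε • d ∈ M.rankPolytope ∧ x + (-ε) • d ∈ M.rankPolytope) ∧ 0 < ε :=
    (((hd.and ((continuous_neg.tendsto' 0 0 neg_zero).eventually hd)).filter_mono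
      (nhdsWithin_le_nhds (s := Set.Ioi 0))).and self_mem_nhdsWithin).exists
  rw [neg_smul, ← sub_eq_add_neg] at hminus
  have hfix := ((mem_extremePoints.mp hx).2 _ hminus _ hplus
    (mem_openSegment_sub_add x (ε • d))).2
  have := congrFun hfix i
  simp [d, hij] at this
  linarith

lemma exists_base_of_zero_one [Fintype α] (hE : M.E = univ) (hx : x ∈ M.rankPolytope)
    (h01 : ∀ i ∈ M.E, x i = 0 ∨ x i = 1) : ∃ B, M.Base B ∧ x = indicatorVec B := by
  set B := M.E.filter fun i ↦ x i = 1
  have hxB : x = indicatorVec B := funext fun i ↦ by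
    have hi : i ∈ M.E := hE ▸ mem_univ i
    rcases h01 i hi with h | h <;> simp [indicatorVec, B, hi, h]
  exact ⟨B, base_of_indicatorVec_mem (filter_subset _ _) (hxB ▸ hx), hxB⟩

theorem basePolytope_eq_rankPolytope [Fintype α] (hE : M.E = univ) :
    basePolytope M = M.rankPolytope := by
  refine basePolytope_subset_rankPolytope.antisymm ?_
  have hfin : {x | ∃ B, M.Base B ∧ x = indicatorVec B}.Finite :=
    (Set.finite_range indicatorVec).subset (by rintro _ ⟨B, -, rfl⟩; exact ⟨B, rfl⟩)
  calc M.rankPolytope = closure (convexHull ℝ (M.rankPolytope.extremePoints ℝ)) :=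
        (closure_convexHull_extremePoints (isCompact_rankPolytope hE) convex_rankPolytope).symm
    _ ⊆ closure (basePolytope M) := closure_mono <| convexHull_mono fun _ hx ↦
        exists_base_of_zero_one hE hx.1 (zero_or_one_of_mem_extremePoints hx)
    _ = basePolytope M := (hfin.isCompact_convexHull ℝ).isClosed.closure_eq

end FinMatroid

theorem statement10_general {α : Type*} [DecidableEq α] [Fintype α] (M : FinMatroid α)
    (hE : M.E = Finset.univ) (hconn : M.Connected) (hloop : M.Loopless)
    {k : ℕ} (hrank : M.r M.E = k) :
    basePolytope M =
      {x : α → ℝ | (∀ i ∈ M.E, 0 ≤ x i) ∧ (∑ i ∈ M.E, x i) = (k : ℝ) ∧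
        ∀ F : Finset α, M.Flat F → M.Nondegenerate F → ∑ i ∈ F, x i ≤ (M.r F : ℝ)} := by
  subst hrank
  rw [FinMatroid.basePolytope_eq_rankPolytope hE]
  ext x
  exact ⟨fun ⟨h0, hsum, hA⟩ ↦ ⟨h0, hsum, fun F hF _ ↦ hA F hF.subset_ground⟩,
    fun ⟨h0, hsum, hnd⟩ ↦ ⟨h0, hsum, fun _ hA ↦
      FinMatroid.sum_le_r_of_nondegenerate hconn hloop h0 hsum hnd hA⟩⟩

/-- For a connected loopless matroid of rank `k ≥ 1` on `S`, the base
polytope is cut out by nonnegativity, the rank equation, and the rank inequalities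
indexed by non-degenerate flats. -/
theorem statement10 {α : Type*} [DecidableEq α] [Fintype α] (M : FinMatroid α)
    (hE : M.E = Finset.univ) (hconn : M.Connected) (hloop : M.Loopless)
    {k : ℕ} (hk : 1 ≤ k) (hrank : M.r M.E = k) :
    basePolytope M =
      {x : α → ℝ | (∀ i ∈ M.E, 0 ≤ x i) ∧ (∑ i ∈ M.E, x i) = (k : ℝ) ∧
        ∀ F : Finset α, M.Flat F → M.Nondegenerate F → ∑ i ∈ F, x i ≤ (M.r F : ℝ)} :=
  statement10_general M hE hconn hloop hrank
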